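/- Let L be a free ℤ-module with symplectic basis α₁,…,α_g,β₁,…,β_g and alternating form ω, and let J_k = α_k + Σ_m b_{km} β_m with B symmetric. Then there exists a composition h of transvections along vectors of the form β_i + β_j (i ≠ j) and along β_i, such that h(J_k) = α_k for all k. -/

import Mathlib

/-!
For vectors `β a` spanning an isotropic subspace, the shears `γ ↦ γ + ∑ a b, M a b ω(γ, β a) β b`
compose by adding the matrices `M`, and the transvection along `∑ vₐ βₐ` applied `n` times is the
shear by `n v vᵀ`. As `ω(J k, β a) = δₖₐ`, the shear by `-B` sends `J k` to `α k`, so it remains to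
write the symmetric matrix `-B` as a sum of matrices `n v vᵀ` with `v = eᵢ` or `v = eᵢ + eⱼ`:
the diagonal comes from the `eᵢeᵢᵀ`, and `Eᵢⱼ + Eⱼᵢ = (eᵢ + eⱼ)(eᵢ + eⱼ)ᵀ - eᵢeᵢᵀ - eⱼeⱼᵀ`.
-/

open scoped Matrix

section Shear

variable {R L ι : Type*} [CommRing R] [AddCommGroup L] [Module R L] (ω : L →ₗ[R] L →ₗ[R] R)

noncomputable def transvection (τ : L) (n : R) : L →ₗ[R] L :=
  LinearMap.id + n • (LinearMap.toSpanSingleton R L τ ∘ₗ ω.flip τ)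

theorem transvection_apply (τ : L) (n : R) (γ : L) :
    transvection ω τ n γ = γ + (n * ω γ τ) • τ := by
  simp [transvection, mul_smul]

variable [Fintype ι] (β : ι → L)

noncomputable def shear (M : Matrix ι ι R) : L →ₗ[R] L :=
  LinearMap.id + ∑ a, ∑ b, M a b • (LinearMap.toSpanSingleton R L (β b) ∘ₗ ω.flip (β a))

theorem shear_apply (M : Matrix ι ι R) (γ : L) :
    shear ω β M γ = γ + ∑ a, ∑ b, (M a b * ω γ (β a)) • β b := by
  simp [shear, LinearMap.sum_apply, mul_smul]

variable {ω β}

theorem shear_add (hβ : ∀ a b, ω (β a) (β b) = 0) (M N : Matrix ι ι R) :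
    shear ω β (M + N) = shear ω β M * shear ω β N := by
  ext γ
  have hN : ∀ a, ω (shear ω β N γ) (β a) = ω γ (β a) := fun a => by simp [shear_apply, hβ]
  simp only [Module.End.mul_apply, shear_apply _ _ M, hN]
  simp only [shear_apply, Matrix.add_apply, add_mul, add_smul, Finset.sum_add_distrib]
  abel

theorem shear_zero : shear ω β (0 : Matrix ι ι R) = 1 := by
  ext γ
  simp [shear_apply]

theorem shear_list_sum (hβ : ∀ a b, ω (β a) (β b) = 0) (l : List (Matrix ι ι R)) :
    shear ω β l.sum = (l.map (shear ω β)).prod := by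
  induction l with
  | nil => exact shear_zero
  | cons M l ih => rw [List.sum_cons, shear_add hβ, ih, List.map_cons, List.prod_cons]

theorem shear_apply_of_pairing_eq_single [DecidableEq ι] {M : Matrix ι ι R} {γ : L} {k : ι}
    (hγ : ∀ a, ω γ (β a) = if k = a then 1 else 0) :
    shear ω β M γ = γ + ∑ b, M k b • β b := by
  simp [shear_apply, hγ]

variable (ω β)

theorem transvection_linearCombination (v : ι → R) (n : R) :
    transvection ω (Fintype.linearCombination R β v) n = shear ω β (n • Matrix.vecMulVec v v) := by
  ext γ
  simp only [transvection_apply, shear_apply, Fintype.linearCombination_apply, map_sum, map_smul,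
    smul_eq_mul, Finset.mul_sum, Finset.smul_sum, smul_smul, Matrix.smul_apply,
    Matrix.vecMulVec_apply]
  rw [Finset.sum_comm]
  congr 1
  refine Finset.sum_congr rfl fun b _ => ?_
  rw [← Finset.sum_smul, Finset.sum_mul]
  congr 1
  refine Finset.sum_congr rfl fun a _ => ?_
  ring

end Shear

section SymmetricDecomposition

variable {R ι : Type*} [Ring R] [DecidableEq ι]

def IsSingleOrPairSum (v : ι → R) : Prop :=
  (∃ i j, i ≠ j ∧ v = Pi.single i 1 + Pi.single j 1) ∨ ∃ i, v = Pi.single i 1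

variable (R ι) in
def squaresOfSinglesAndPairs : Set (Matrix ι ι R) :=
  {N | ∃ (n : R) (v : ι → R), IsSingleOrPairSum v ∧ N = n • Matrix.vecMulVec v v}

theorem single_mem_squaresOfSinglesAndPairs (i : ι) (c : R) :
    Matrix.single i i c ∈ squaresOfSinglesAndPairs R ι :=
  ⟨c, _, Or.inr ⟨i, rfl⟩, by
    rw [← Matrix.single_eq_single_vecMulVec_single, Matrix.smul_single, smul_eq_mul, mul_one]⟩

theorem single_add_single_mem_closure_squaresOfSinglesAndPairs (i j : ι) (c : R) :
    Matrix.single i j c + Matrix.single j i c ∈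
      AddSubmonoid.closure (squaresOfSinglesAndPairs R ι) := by
  rcases eq_or_ne i j with rfl | hij
  · rw [← Matrix.single_add]
    exact AddSubmonoid.subset_closure (single_mem_squaresOfSinglesAndPairs i _)
  have hpair : c • Matrix.vecMulVec (Pi.single i 1 + Pi.single j 1) (Pi.single i 1 + Pi.single j 1)
      + Matrix.single i i (-c) + Matrix.single j j (-c) = Matrix.single i j c + Matrix.single j i c := by
    simp only [Matrix.add_vecMulVec, Matrix.vecMulVec_add, ← Matrix.single_eq_single_vecMulVec_single,
      smul_add, Matrix.smul_single, smul_eq_mul, mul_one, ← Matrix.single_neg]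
    abel
  rw [← hpair]
  refine add_mem (add_mem (AddSubmonoid.subset_closure ⟨c, _, Or.inl ⟨i, j, hij, rfl⟩, rfl⟩) ?_) ?_ <;>
    exact AddSubmonoid.subset_closure (single_mem_squaresOfSinglesAndPairs _ _)

theorem Matrix.IsSymm.mem_closure_squaresOfSinglesAndPairs [Fintype ι] {M : Matrix ι ι R}
    (hM : M.IsSymm) : M ∈ AddSubmonoid.closure (squaresOfSinglesAndPairs R ι) := by
  let _ : LinearOrder ι := LinearOrder.lift' _ (Fintype.equivFin ι).injective
  set U : Matrix ι ι R := Matrix.of fun i j => if i < j then M i j else 0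
  have hMU : M = U + Uᵀ + Matrix.diagonal fun i => M i i := by
    ext a b
    rcases lt_trichotomy a b with h | rfl | h
    · simp [U, h, h.ne, h.not_gt]
    · simp [U]
    · simp [U, h, h.ne', h.not_gt, hM.apply]
  have hUU : U + Uᵀ = ∑ i, ∑ j, (Matrix.single i j (U i j) + Matrix.single j i (U i j)) := by
    conv_lhs => rw [Matrix.matrix_eq_sum_single U]
    simp only [Matrix.transpose_sum, Matrix.transpose_single, ← Finset.sum_add_distrib]
  rw [hMU, hUU, ← Matrix.sum_single_eq_diagonal]
  refine add_mem (sum_mem fun i _ => sum_mem fun j _ => ?_) (sum_mem fun i _ => ?_)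
  · exact single_add_single_mem_closure_squaresOfSinglesAndPairs i j _
  · exact AddSubmonoid.subset_closure (single_mem_squaresOfSinglesAndPairs i _)

end SymmetricDecomposition

theorem untwist_by_transvections_general
    (L : Type*) [AddCommGroup L] [Module ℤ L]
    (g : ℕ)
    (ω : L →ₗ[ℤ] L →ₗ[ℤ] ℤ)
    (α β : Fin g → L)
    (hαβ : ∀ i j, ω (α i) (β j) = if i = j then 1 else 0)
    (hββ : ∀ i j, ω (β i) (β j) = 0)
    (B : Matrix (Fin g) (Fin g) ℤ) (hBsymm : B.IsSymm)
    (J : Fin g → L) (hJ : ∀ k, J k = α k + ∑ m, B k m • β m) :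
    ∃ l : List (L →ₗ[ℤ] L),
      (∀ f ∈ l, ∃ τ : L,
        ((∃ i j : Fin g, i ≠ j ∧ τ = β i + β j) ∨ (∃ i : Fin g, τ = β i)) ∧
        ∃ n : ℤ, ∀ γ : L, f γ = γ + (n * ω γ τ) • τ) ∧
      ∀ k, l.prod (J k) = α k := by
  -- the `•` of the statement is `zsmul`, the linear maps are linear for the given `Module ℤ L`
  obtain rfl : ‹Module ℤ L› = AddCommGroup.toIntModule L := Subsingleton.elim _ _
  obtain ⟨l, hl, hl_sum⟩ :=
    AddSubmonoid.exists_list_of_mem_closure hBsymm.neg.mem_closure_squaresOfSinglesAndPairs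
  refine ⟨l.map (shear ω β), List.forall_mem_map.2 fun N hN => ?_, fun k => ?_⟩
  · obtain ⟨n, v, hv, rfl⟩ := hl N hN
    refine ⟨Fintype.linearCombination ℤ β v, ?_, n, ?_⟩
    · rcases hv with ⟨i, j, hij, rfl⟩ | ⟨i, rfl⟩
      · exact Or.inl ⟨i, j, hij, by simp [Fintype.linearCombination_apply_single]⟩
      · exact Or.inr ⟨i, by simp⟩
    · rw [← transvection_linearCombination]
      exact transvection_apply ω _ n
  · have hJβ : ∀ a, ω (J k) (β a) = if k = a then 1 else 0 := by simp [hJ, hαβ, hββ]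
    rw [← shear_list_sum hββ, hl_sum, shear_apply_of_pairing_eq_single hJβ, hJ]
    simp

/-- With a symplectic basis `α₁,…,α_g, β₁,…,β_g`, symmetric `B`, and
`J k = α k + ∑ m, B k m • β m`, there is a composition `h` of transvections
along vectors of the form `β i + β j` (`i ≠ j`) and along `β i` (each applied
an arbitrary integer number of times) with `h (J k) = α k` for all `k`. -/
theorem untwist_by_transvections
    (L : Type*) [AddCommGroup L] [Module ℤ L]
    (g : ℕ) (b : Module.Basis (Fin g ⊕ Fin g) ℤ L)
    (ω : L →ₗ[ℤ] L →ₗ[ℤ] ℤ) (halt : ∀ x, ω x x = 0)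
    (α β : Fin g → L)
    (hα : ∀ i, α i = b (Sum.inl i)) (hβ : ∀ j, β j = b (Sum.inr j))
    (hαβ : ∀ i j, ω (α i) (β j) = if i = j then 1 else 0)
    (hβα : ∀ i j, ω (β i) (α j) = if i = j then -1 else 0)
    (hαα : ∀ i j, ω (α i) (α j) = 0)
    (hββ : ∀ i j, ω (β i) (β j) = 0)
    (B : Matrix (Fin g) (Fin g) ℤ) (hBsymm : B.IsSymm)
    (J : Fin g → L) (hJ : ∀ k, J k = α k + ∑ m, B k m • β m) :
    ∃ l : List (L →ₗ[ℤ] L),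
      (∀ f ∈ l, ∃ τ : L,
        ((∃ i j : Fin g, i ≠ j ∧ τ = β i + β j) ∨ (∃ i : Fin g, τ = β i)) ∧
        ∃ n : ℤ, ∀ γ : L, f γ = γ + (n * ω γ τ) • τ) ∧
      ∀ k, l.prod (J k) = α k :=
  untwist_by_transvections_general L g ω α β hαβ hββ B hBsymm J hJ
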